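/- Let E be a finite set, let F be a finite index set, and for each f ∈ F let E_f ⊆ E and w_f ≥ 0. Let x : E → [0,1], and let X = (X_e)_{e∈E} be a random vector with values in {0,1}^E satisfying: (P1) E[X_e] = x_e for every e ∈ E, and (P3) for every f ∈ F and every subset S ⊆ E_f, Pr[X_e = 0 for all e ∈ S] ≤ ∏_{e∈S} Pr[X_e = 0]. Then E[ Σ_{f∈F} w_f · 1{∃ e ∈ E_f with X_e = 1} ] ≥ (1 − 1/e) · Σ_{f∈F} w_f · min(1, Σ_{e∈E_f} x_e). -/

import Mathlib

/-!
If no element of `E_f` is picked, every `X_e` with `e ∈ E_f` vanishes, so by (P3) and (P1)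
`Pr[E_f uncovered] ≤ ∏_{e ∈ E_f} (1 - x_e) ≤ exp (-s)` with `s = ∑_{e ∈ E_f} x_e`.
Convexity of `exp` on `[-1, 0]` gives `1 - exp (-s) ≥ (1 - e⁻¹) min 1 s`, and linearity of
expectation sums these bounds over `f`.
-/

open MeasureTheory Real

lemma exp_neg_le_one_sub_add_mul_exp_neg_one {s : ℝ} (h0 : 0 ≤ s) (h1 : s ≤ 1) :
    exp (-s) ≤ 1 - s + s * exp (-1) := by
  simpa using convexOn_exp.2 (Set.mem_univ 0) (Set.mem_univ (-1)) (sub_nonneg.2 h1) h0 (by ring)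

lemma one_sub_exp_neg_one_mul_min_le {s : ℝ} (hs : 0 ≤ s) :
    (1 - exp (-1)) * min 1 s ≤ 1 - exp (-s) := by
  rcases le_total 1 s with h | h
  · rw [min_eq_left h, mul_one]
    gcongr
  · rw [min_eq_right h]
    linarith [exp_neg_le_one_sub_add_mul_exp_neg_one hs h]

lemma prod_one_sub_le_exp_neg_sum {ι : Type*} (S : Finset ι) {x : ι → ℝ}
    (hx : ∀ i ∈ S, x i ≤ 1) : ∏ i ∈ S, (1 - x i) ≤ exp (-∑ i ∈ S, x i) := by
  rw [← Finset.sum_neg_distrib, exp_sum]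
  exact Finset.prod_le_prod (fun i hi => sub_nonneg.2 (hx i hi)) fun i _ => one_sub_le_exp_neg (x i)

lemma one_sub_exp_neg_one_mul_min_le_one_sub_prod {ι : Type*} (S : Finset ι) {x : ι → ℝ}
    (hx : ∀ i ∈ S, 0 ≤ x i ∧ x i ≤ 1) :
    (1 - exp (-1)) * min 1 (∑ i ∈ S, x i) ≤ 1 - ∏ i ∈ S, (1 - x i) :=
  calc (1 - exp (-1)) * min 1 (∑ i ∈ S, x i) ≤ 1 - exp (-∑ i ∈ S, x i) :=
        one_sub_exp_neg_one_mul_min_le (Finset.sum_nonneg fun i hi => (hx i hi).1)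
    _ ≤ 1 - ∏ i ∈ S, (1 - x i) :=
        sub_le_sub_left (prod_one_sub_le_exp_neg_sum S fun i hi => (hx i hi).2) 1

section BinaryRandomVariables

variable {Ω ι : Type*} [MeasurableSpace Ω] {μ : Measure Ω}

lemma integral_eq_measureReal_eq_one {Y : Ω → ℝ} (hYm : Measurable Y)
    (hY : ∀ ω, Y ω = 0 ∨ Y ω = 1) : ∫ ω, Y ω ∂μ = μ.real {ω | Y ω = 1} := by
  have hone : MeasurableSet {ω | Y ω = 1} := hYm (measurableSet_singleton 1)
  rw [← integral_indicator_one hone]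
  congr 1
  funext ω
  rcases hY ω with h | h <;> simp [h]

lemma measureReal_eq_zero_eq_one_sub_integral [IsProbabilityMeasure μ] {Y : Ω → ℝ}
    (hYm : Measurable Y) (hY : ∀ ω, Y ω = 0 ∨ Y ω = 1) :
    μ.real {ω | Y ω = 0} = 1 - ∫ ω, Y ω ∂μ := by
  have hone : MeasurableSet {ω | Y ω = 1} := hYm (measurableSet_singleton 1)
  have hcompl : {ω | Y ω = 0} = {ω | Y ω = 1}ᶜ := by
    ext ω
    rcases hY ω with h | h <;> simp [h]
  rw [hcompl, probReal_compl_eq_one_sub hone,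
    integral_eq_measureReal_eq_one hYm hY]

lemma measurableSet_exists_eq_one {X : ι → Ω → ℝ} (hXm : ∀ i, Measurable (X i)) (S : Finset ι) :
    MeasurableSet {ω | ∃ i ∈ S, X i ω = 1} := by
  have hunion : {ω | ∃ i ∈ S, X i ω = 1} = ⋃ i ∈ S, X i ⁻¹' {1} := by ext; simp
  exact hunion ▸ S.measurableSet_biUnion fun i _ => hXm i (measurableSet_singleton 1)

lemma measureReal_exists_eq_one [IsProbabilityMeasure μ] {X : ι → Ω → ℝ}
    (hXm : ∀ i, Measurable (X i)) (hX : ∀ i ω, X i ω = 0 ∨ X i ω = 1) (S : Finset ι) :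
    μ.real {ω | ∃ i ∈ S, X i ω = 1} = 1 - μ.real {ω | ∀ i ∈ S, X i ω = 0} := by
  have hcompl : {ω | ∀ i ∈ S, X i ω = 0} = {ω | ∃ i ∈ S, X i ω = 1}ᶜ := by
    ext ω
    simp only [Set.mem_ofPred_eq, Set.mem_compl_iff, not_exists, not_and]
    refine forall₂_congr fun i _ => ?_
    rcases hX i ω with h | h <;> simp [h]
  rw [hcompl, probReal_compl_eq_one_sub (measurableSet_exists_eq_one hXm S), sub_sub_cancel]

lemma one_sub_exp_neg_one_mul_min_le_measureReal_exists [IsProbabilityMeasure μ]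
    {X : ι → Ω → ℝ} (hXm : ∀ i, Measurable (X i)) (hX : ∀ i ω, X i ω = 0 ∨ X i ω = 1)
    {x : ι → ℝ} (hP1 : ∀ i, ∫ ω, X i ω ∂μ = x i) (S : Finset ι)
    (hx : ∀ i ∈ S, 0 ≤ x i ∧ x i ≤ 1)
    (hP3 : μ.real {ω | ∀ i ∈ S, X i ω = 0} ≤ ∏ i ∈ S, μ.real {ω | X i ω = 0}) :
    (1 - exp (-1)) * min 1 (∑ i ∈ S, x i) ≤ μ.real {ω | ∃ i ∈ S, X i ω = 1} := by
  have hzero : ∀ i, μ.real {ω | X i ω = 0} = 1 - x i := fun i => by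
    rw [measureReal_eq_zero_eq_one_sub_integral (hXm i) (hX i), hP1 i]
  calc (1 - exp (-1)) * min 1 (∑ i ∈ S, x i) ≤ 1 - ∏ i ∈ S, (1 - x i) :=
        one_sub_exp_neg_one_mul_min_le_one_sub_prod S hx
    _ ≤ 1 - μ.real {ω | ∀ i ∈ S, X i ω = 0} := by
        simp only [← hzero]
        exact sub_le_sub_left hP3 1
    _ = μ.real {ω | ∃ i ∈ S, X i ω = 1} := (measureReal_exists_eq_one hXm hX S).symm

end BinaryRandomVariables

lemma integral_sum_mul_indicator_one {Ω β : Type*} [MeasurableSpace Ω] {μ : Measure Ω}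
    [IsFiniteMeasure μ] (s : Finset β) (w : β → ℝ) {A : β → Set Ω}
    (hA : ∀ f, MeasurableSet (A f)) :
    ∫ ω, ∑ f ∈ s, w f * (A f).indicator (fun _ => (1 : ℝ)) ω ∂μ = ∑ f ∈ s, w f * μ.real (A f) := by
  rw [integral_finsetSum s fun f _ => ((integrable_const 1).indicator (hA f)).const_mul (w f)]
  refine Finset.sum_congr rfl fun f _ => ?_
  rw [integral_const_mul, integral_indicator_const _ (hA f), smul_eq_mul, mul_one]

theorem stmt_3_general {α β Ω : Type*} [Fintype β] [MeasurableSpace Ω]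
    (μ : Measure Ω) [IsProbabilityMeasure μ]
    (Ef : β → Finset α) (w : β → ℝ) (hw : ∀ f, 0 ≤ w f)
    (x : α → ℝ) (hx : ∀ e, 0 ≤ x e ∧ x e ≤ 1)
    (X : α → Ω → ℝ) (hXmeas : ∀ e, Measurable (X e))
    (hXbin : ∀ e ω, X e ω = 0 ∨ X e ω = 1)
    (hP1 : ∀ e, ∫ ω, X e ω ∂μ = x e)
    (hP3 : ∀ f : β, ∀ S ⊆ Ef f,
      (μ {ω | ∀ e ∈ S, X e ω = 0}).toReal ≤ ∏ e ∈ S, (μ {ω | X e ω = 0}).toReal) :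
    ∫ ω, ∑ f, w f * ({ω' | ∃ e ∈ Ef f, X e ω' = 1}.indicator (fun _ => (1:ℝ)) ω) ∂μ
      ≥ (1 - 1 / Real.exp 1) * ∑ f, w f * min 1 (∑ e ∈ Ef f, x e) := by
  rw [integral_sum_mul_indicator_one _ w fun f => measurableSet_exists_eq_one hXmeas (Ef f),
    one_div, ← exp_neg, Finset.mul_sum, ge_iff_le]
  refine Finset.sum_le_sum fun f _ => ?_
  rw [mul_left_comm]
  exact mul_le_mul_of_nonneg_left (one_sub_exp_neg_one_mul_min_le_measureReal_exists hXmeas hXbin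
    hP1 (Ef f) (fun e _ => hx e) (hP3 f (Ef f) subset_rfl)) (hw f)

theorem stmt_3 {α β Ω : Type*} [Fintype α] [Fintype β] [MeasurableSpace Ω]
    (μ : Measure Ω) [IsProbabilityMeasure μ]
    (Ef : β → Finset α) (w : β → ℝ) (hw : ∀ f, 0 ≤ w f)
    (x : α → ℝ) (hx : ∀ e, 0 ≤ x e ∧ x e ≤ 1)
    (X : α → Ω → ℝ) (hXmeas : ∀ e, Measurable (X e))
    (hXbin : ∀ e ω, X e ω = 0 ∨ X e ω = 1)
    (hP1 : ∀ e, ∫ ω, X e ω ∂μ = x e)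
    (hP3 : ∀ f : β, ∀ S ⊆ Ef f,
      (μ {ω | ∀ e ∈ S, X e ω = 0}).toReal ≤ ∏ e ∈ S, (μ {ω | X e ω = 0}).toReal) :
    ∫ ω, ∑ f, w f * ({ω' | ∃ e ∈ Ef f, X e ω' = 1}.indicator (fun _ => (1:ℝ)) ω) ∂μ
      ≥ (1 - 1 / Real.exp 1) * ∑ f, w f * min 1 (∑ e ∈ Ef f, x e) :=
  stmt_3_general μ Ef w hw x hx X hXmeas hXbin hP1 hP3
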